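/- arXiv:1208.4052 — 3 statements merged into one kernel-verified Lean document; each statement's English description precedes it below -/
import Mathlib

section
/- For every bidegree (k,κ) with n + k − κ > 0, one has ker Q ∩ W_{k,κ} = Q(W_{k−1,κ−1}) and ker Q* ∩ W_{k,κ} = Q*(W_{k+1,κ+1}); moreover ker Q* ∩ W_{k,κ} = Q*(ker Q ∩ W_{k+1,κ+1}). That is, on such components the kernel of Q equals its image and the kernel of Q* equals its image, which is already the image of ker Q under Q*. -/
open MvPolynomial Finset

namespace SpinQuant

noncomputable section

/-- Diagonal entries of the signature-`(p,q)` bilinear form `η` on `ℝⁿ`, `n = p + q`: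
`+1` for the first `p` indices and `-1` for the last `q` ones.  Since `η` is diagonal
and equal to its inverse, these are simultaneously the `η_{ii}` and the `η^{ii}`. -/
def eta (p q : ℕ) (i : Fin (p + q)) : ℝ := if (i : ℕ) < p then 1 else -1

/-- The supercommutative algebra `W = ℝ[p₁,…,pₙ] ⊗ Λ(ξ¹,…,ξⁿ)`, modeled as families of
polynomials in the even variables `p_i`, indexed by the subsets of `Fin n` recording the
monomials in the odd variables `ξ^i` (a subset `S` stands for the exterior monomial
`ξ^{i₁} ∧ ⋯ ∧ ξ^{iκ}` with `i₁ < ⋯ < iκ` the elements of `S`). -/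
abbrev W (p q : ℕ) := Finset (Fin (p + q)) → MvPolynomial (Fin (p + q)) ℝ

/-- Koszul sign of moving `ξ^i` through the monomial `ξ^S`. -/
def sgn (p q : ℕ) (i : Fin (p + q)) (S : Finset (Fin (p + q))) : ℝ :=
  (-1) ^ (S.filter (fun j => j < i)).card

/-- Multiplication by the even variable `p_i`. -/
def pMul (p q : ℕ) (i : Fin (p + q)) : Module.End ℝ (W p q) where
  toFun f S := X i * f S
  map_add' f g := by funext S; simp [mul_add]
  map_smul' c f := by funext S; simp [mul_smul_comm]

/-- The partial derivative `∂/∂p_i`. -/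
def pD (p q : ℕ) (i : Fin (p + q)) : Module.End ℝ (W p q) where
  toFun f S := pderiv i (f S)
  map_add' f g := by funext S; simp
  map_smul' c f := by funext S; simp

/-- Exterior multiplication by the odd variable `ξ^i`. -/
def xiMul (p q : ℕ) (i : Fin (p + q)) : Module.End ℝ (W p q) where
  toFun f S := if i ∈ S then sgn p q i S • f (S.erase i) else 0
  map_add' f g := by funext S; by_cases h : i ∈ S <;> simp [h, smul_add]
  map_smul' c f := by funext S; by_cases h : i ∈ S <;> simp [h, smul_smul, mul_comm]

/-- The odd superderivation `∂/∂ξ^i`, determined by `∂_{ξ^i}(ξ^j) = δ_i^j`. -/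
def xiD (p q : ℕ) (i : Fin (p + q)) : Module.End ℝ (W p q) where
  toFun f S := if i ∈ S then 0 else sgn p q i (insert i S) • f (insert i S)
  map_add' f g := by funext S; by_cases h : i ∈ S <;> simp [h, smul_add]
  map_smul' c f := by funext S; by_cases h : i ∈ S <;> simp [h, smul_smul, mul_comm]

/-- `R`, multiplication by `η^{ij} p_i p_j`. -/
def opR (p q : ℕ) : Module.End ℝ (W p q) := ∑ i, eta p q i • (pMul p q i * pMul p q i)

/-- The even Euler operator `ℰ = p_i ∂_{p_i}`. -/
def opE (p q : ℕ) : Module.End ℝ (W p q) := ∑ i, pMul p q i * pD p q i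

/-- The trace operator `T = η_{ij} ∂_{p_i} ∂_{p_j}`. -/
def opT (p q : ℕ) : Module.End ℝ (W p q) := ∑ i, eta p q i • (pD p q i * pD p q i)

/-- The odd Euler operator `Σ = ξ^i ∂_{ξ^i}`. -/
def opS (p q : ℕ) : Module.End ℝ (W p q) := ∑ i, xiMul p q i * xiD p q i

/-- `Q`, multiplication by `ξ^i p_i`. -/
def opQ (p q : ℕ) : Module.End ℝ (W p q) := ∑ i, xiMul p q i * pMul p q i

/-- `Q* = ∂_{ξ^i} ∂_{p_i}`. -/
def opQs (p q : ℕ) : Module.End ℝ (W p q) := ∑ i, xiD p q i * pD p q i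

/-- The Koszul differential `δ = η_{ij} ξ^i ∂_{p_j}`. -/
def opd (p q : ℕ) : Module.End ℝ (W p q) := ∑ i, eta p q i • (xiMul p q i * pD p q i)

/-- The Koszul codifferential `δ* = η^{ij} p_i ∂_{ξ^j}`. -/
def opds (p q : ℕ) : Module.End ℝ (W p q) := ∑ i, eta p q i • (pMul p q i * xiD p q i)

/-- The bihomogeneous component `W_{k,κ}`: polynomial degree `k` in the `p` variables and
exterior degree `κ` in the `ξ` variables. -/
def Wc (p q : ℕ) (k κ : ℕ) : Submodule ℝ (W p q) where
  carrier := { f | (∀ S, f S ∈ homogeneousSubmodule (Fin (p + q)) ℝ k) ∧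
      ∀ S, S.card ≠ κ → f S = 0 }
  add_mem' := fun ha hb => ⟨fun S => add_mem (ha.1 S) (hb.1 S),
    fun S h => by simp [Pi.add_apply, ha.2 S h, hb.2 S h]⟩
  zero_mem' := ⟨fun S => zero_mem _, fun S _ => rfl⟩
  smul_mem' := fun c f hf => ⟨fun S => Submodule.smul_mem _ c (hf.1 S),
    fun S h => by simp [Pi.smul_apply, hf.2 S h]⟩

/-- The component `W_{k,κ}` with integer indices, with the convention that it is the zero
subspace as soon as one of the indices is negative. -/
def WcZ (p q : ℕ) (k κ : ℤ) : Submodule ℝ (W p q) :=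
  if 0 ≤ k ∧ 0 ≤ κ then Wc p q k.toNat κ.toNat else ⊥

/-!
The generators obey the canonical relations: the `p_i` and `∂_{p_j}` commute except for
`[∂_{p_i}, p_j] = δ_ij`, the `ξ^i` and `∂_{ξ^j}` anticommute except for `{∂_{ξ^i}, ξ^j} = δ_ij`,
and even generators commute with odd ones. Hence `Q² = Q*² = 0` and
`QQ* + Q*Q = ℰ + n − Σ`, which by Euler's identity acts on `W_{k,κ}` as the scalar
`c = n + k − κ`. When `c ≠ 0` this is a contracting homotopy: a `Q`-closed `f ∈ W_{k,κ}` equals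
`Q (c⁻¹ Q* f)`, and a `Q*`-closed one equals `Q* (c⁻¹ Q f)` with `c⁻¹ Q f` again `Q`-closed.
-/

lemma _root_.MvPolynomial.pderiv_pderiv_comm {R σ : Type*} [CommRing R] (i j : σ)
    (g : MvPolynomial σ R) : pderiv i (pderiv j g) = pderiv j (pderiv i g) := by
  classical
  have h : ⁅pderiv i, pderiv j⁆ = (0 : Derivation R (MvPolynomial σ R) (MvPolynomial σ R)) :=
    derivation_ext fun k => by
      rw [Derivation.commutator_apply, pderiv_X, pderiv_X, Derivation.zero_apply]
      simp only [Pi.single_apply]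
      split_ifs <;> simp
  rw [← sub_eq_zero, ← Derivation.commutator_apply, h, Derivation.zero_apply]

lemma _root_.Finset.sum_sum_eq_zero_of_antisymm (K : Type*) {M ι : Type*} [DivisionRing K]
    [CharZero K] [AddCommGroup M] [Module K M] (s : Finset ι) {f : ι → ι → M}
    (h : ∀ i j, f j i = -f i j) : ∑ i ∈ s, ∑ j ∈ s, f i j = 0 := by
  have hneg : ∑ i ∈ s, ∑ j ∈ s, f i j = -∑ i ∈ s, ∑ j ∈ s, f i j := by
    conv_lhs => rw [Finset.sum_comm]
    rw [← Finset.sum_neg_distrib]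
    exact Finset.sum_congr rfl fun i _ => by
      rw [← Finset.sum_neg_distrib]; exact Finset.sum_congr rfl fun j _ => h i j
  have h2 : (2 : K) • ∑ i ∈ s, ∑ j ∈ s, f i j = 0 := by
    rw [two_smul]; nth_rw 1 [hneg]; exact neg_add_cancel _
  exact (smul_eq_zero.1 h2).resolve_left two_ne_zero

theorem _root_.Module.End.ker_inf_eq_map_of_anticomm {K V : Type*} [Field K] [AddCommGroup V]
    [Module K V] {d δ : Module.End K V} (hd : d * d = 0) (hδ : δ * δ = 0)
    {A B : Submodule K V} (hA : A.map d ≤ B) (hB : B.map δ ≤ A) {c : K} (hc : c ≠ 0)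
    (h : ∀ v ∈ B, d (δ v) + δ (d v) = c • v) :
    LinearMap.ker d ⊓ B = A.map d ∧ LinearMap.ker d ⊓ B = (LinearMap.ker δ ⊓ A).map d := by
  have ker_le : LinearMap.ker d ⊓ B ≤ (LinearMap.ker δ ⊓ A).map d := by
    intro v hv
    obtain ⟨hv, hvB⟩ := Submodule.mem_inf.1 hv
    refine ⟨c⁻¹ • δ v, Submodule.mem_inf.2 ⟨?_, A.smul_mem _ (hB ⟨v, hvB, rfl⟩)⟩, ?_⟩
    · rw [LinearMap.mem_ker, map_smul, ← Module.End.mul_apply, hδ, LinearMap.zero_apply,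
        smul_zero]
    · have hv' := h v hvB
      rw [LinearMap.mem_ker.1 hv, map_zero, add_zero] at hv'
      rw [map_smul, hv', inv_smul_smul₀ hc]
  have map_le : A.map d ≤ LinearMap.ker d ⊓ B := by
    rintro _ ⟨a, ha, rfl⟩
    refine Submodule.mem_inf.2 ⟨?_, hA ⟨a, ha, rfl⟩⟩
    rw [LinearMap.mem_ker, ← Module.End.mul_apply, hd, LinearMap.zero_apply]
  exact ⟨le_antisymm (ker_le.trans (Submodule.map_mono inf_le_right)) map_le,
    le_antisymm ker_le ((Submodule.map_mono inf_le_right).trans map_le)⟩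

lemma ite_lt_add_ite_lt {α : Type*} [LinearOrder α] {i j : α} (h : i ≠ j) :
    (if i < j then (-1 : ℝ) else 1) + (if j < i then -1 else 1) = 0 := by
  rcases h.lt_or_gt with h | h <;> simp [h, h.not_gt]

variable {p q : ℕ}

section Signs

variable (i j : Fin (p + q)) (S : Finset (Fin (p + q)))

lemma sgn_mul_self : sgn p q i S * sgn p q i S = 1 := by
  rw [sgn, ← pow_add, ← two_mul, pow_mul]
  norm_num

lemma sgn_insert (h : i ∉ S) :
    sgn p q j (insert i S) = (if i < j then -1 else 1) * sgn p q j S := by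
  unfold sgn
  rw [Finset.filter_insert]
  split_ifs
  · rw [Finset.card_insert_of_notMem fun hc => h (Finset.mem_of_mem_filter i hc), pow_succ]
    ring
  · rw [one_mul]

lemma sgn_erase (h : i ∈ S) :
    sgn p q j (S.erase i) = (if i < j then -1 else 1) * sgn p q j S := by
  conv_rhs => rw [← Finset.insert_erase h, sgn_insert i j _ (Finset.notMem_erase i S)]
  split_ifs <;> ring

end Signs

section Generators

variable (i j : Fin (p + q)) (f : W p q) (S : Finset (Fin (p + q)))

lemma pMul_apply : pMul p q i f S = X i * f S := rfl

lemma pD_apply : pD p q i f S = pderiv i (f S) := rfl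

lemma xiMul_apply : xiMul p q i f S = if i ∈ S then sgn p q i S • f (S.erase i) else 0 := rfl

lemma xiD_apply :
    xiD p q i f S = if i ∈ S then 0 else sgn p q i (insert i S) • f (insert i S) := rfl

lemma commute_pMul_pMul : Commute (pMul p q i) (pMul p q j) :=
  LinearMap.ext fun _ => funext fun _ => mul_left_comm _ _ _

lemma commute_pD_pD : Commute (pD p q i) (pD p q j) :=
  LinearMap.ext fun f => funext fun S => pderiv_pderiv_comm i j (f S)

lemma commute_pMul_xiMul : Commute (pMul p q i) (xiMul p q j) := by
  refine LinearMap.ext fun f => funext fun S => ?_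
  simp only [Module.End.mul_apply, xiMul_apply, pMul_apply]
  split_ifs <;> simp

lemma commute_pMul_xiD : Commute (pMul p q i) (xiD p q j) := by
  refine LinearMap.ext fun f => funext fun S => ?_
  simp only [Module.End.mul_apply, xiD_apply, pMul_apply]
  split_ifs <;> simp

lemma commute_pD_xiMul : Commute (pD p q i) (xiMul p q j) := by
  refine LinearMap.ext fun f => funext fun S => ?_
  simp only [Module.End.mul_apply, xiMul_apply, pD_apply]
  split_ifs <;> simp

lemma commute_pD_xiD : Commute (pD p q i) (xiD p q j) := by
  refine LinearMap.ext fun f => funext fun S => ?_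
  simp only [Module.End.mul_apply, xiD_apply, pD_apply]
  split_ifs <;> simp

lemma pD_mul_pMul :
    pD p q i * pMul p q j = pMul p q j * pD p q i + if i = j then 1 else 0 := by
  refine LinearMap.ext fun f => funext fun S => ?_
  simp only [Module.End.mul_apply, LinearMap.add_apply, pD_apply, pMul_apply, pderiv_mul]
  split_ifs with h
  · subst h; simp [pMul_apply, pD_apply, add_comm]
  · simp [pderiv_X_of_ne (Ne.symm h), pMul_apply, pD_apply]

lemma xiMul_anticomm : xiMul p q i * xiMul p q j + xiMul p q j * xiMul p q i = 0 := by
  refine LinearMap.ext fun f => funext fun S => ?_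
  simp only [LinearMap.add_apply, Module.End.mul_apply, LinearMap.zero_apply, Pi.add_apply,
    Pi.zero_apply, xiMul_apply]
  by_cases hij : i = j
  · subst hij; simp
  by_cases hi : i ∈ S <;> by_cases hj : j ∈ S <;>
    simp only [hi, hj, Finset.mem_erase, Ne.symm hij, hij, ne_eq, not_false_iff, and_true,
      and_false, if_true, if_false, smul_zero, add_zero]
  rw [Finset.erase_right_comm, smul_smul, smul_smul, ← add_smul]
  convert zero_smul ℝ (f ((S.erase j).erase i))
  rw [sgn_erase i j S hi, sgn_erase j i S hj]
  linear_combination (sgn p q i S * sgn p q j S) * ite_lt_add_ite_lt hij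

lemma xiD_anticomm : xiD p q i * xiD p q j + xiD p q j * xiD p q i = 0 := by
  refine LinearMap.ext fun f => funext fun S => ?_
  simp only [LinearMap.add_apply, Module.End.mul_apply, LinearMap.zero_apply, Pi.add_apply,
    Pi.zero_apply, xiD_apply]
  by_cases hij : i = j
  · subst hij; simp
  by_cases hi : i ∈ S <;> by_cases hj : j ∈ S <;>
    simp only [hi, hj, Finset.mem_insert, Ne.symm hij, hij, or_false, or_true,
      if_true, if_false, smul_zero, add_zero]
  rw [Finset.insert_comm j i S, smul_smul, smul_smul, ← add_smul]
  convert zero_smul ℝ (f (insert i (insert j S)))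
  rw [sgn_insert i j _ (by simp [hij, hi]), ← Finset.insert_comm j i S,
    sgn_insert j i _ (by simp [Ne.symm hij, hj])]
  linear_combination (sgn p q i (insert i S) * sgn p q j (insert j S)) * ite_lt_add_ite_lt hij

lemma xiD_xiMul_anticomm :
    xiD p q i * xiMul p q j + xiMul p q j * xiD p q i = if i = j then 1 else 0 := by
  refine LinearMap.ext fun f => funext fun S => ?_
  simp only [LinearMap.add_apply, Module.End.mul_apply, Pi.add_apply, xiD_apply, xiMul_apply]
  by_cases hij : i = j
  · subst hij
    by_cases hi : i ∈ S <;> simp [hi, smul_smul, sgn_mul_self]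
  rw [if_neg hij]
  by_cases hi : i ∈ S <;> by_cases hj : j ∈ S <;>
    simp only [hi, hj, Finset.mem_insert, Finset.mem_erase, Ne.symm hij, hij, ne_eq,
      not_false_iff, or_false, false_or, and_true, and_false, if_true, if_false, smul_zero,
      add_zero, LinearMap.zero_apply, Pi.zero_apply]
  rw [Finset.erase_insert_of_ne hij, smul_smul, smul_smul, ← add_smul]
  convert zero_smul ℝ (f (insert i (S.erase j)))
  rw [sgn_insert i j S hi, ← Finset.erase_insert_of_ne hij,
    sgn_erase j i _ (Finset.mem_insert_of_mem hj)]
  linear_combination (sgn p q i (insert i S) * sgn p q j S) * ite_lt_add_ite_lt hij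

end Generators

lemma opQ_mul_self : opQ p q * opQ p q = 0 := by
  rw [opQ, Finset.sum_mul_sum]
  refine Finset.sum_sum_eq_zero_of_antisymm ℝ _ fun i j => ?_
  rw [(commute_pMul_xiMul j i).mul_mul_mul_comm, (commute_pMul_xiMul i j).mul_mul_mul_comm,
    eq_neg_of_add_eq_zero_right (xiMul_anticomm i j), (commute_pMul_pMul i j).eq]
  exact neg_mul (α := Module.End ℝ (W p q)) _ _

lemma opQs_mul_self : opQs p q * opQs p q = 0 := by
  rw [opQs, Finset.sum_mul_sum]
  refine Finset.sum_sum_eq_zero_of_antisymm ℝ _ fun i j => ?_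
  rw [(commute_pD_xiD j i).mul_mul_mul_comm, (commute_pD_xiD i j).mul_mul_mul_comm,
    eq_neg_of_add_eq_zero_right (xiD_anticomm i j), (commute_pD_pD i j).eq]
  exact neg_mul (α := Module.End ℝ (W p q)) _ _

lemma anticomm_xiMul_pMul_xiD_pD (i j : Fin (p + q)) :
    xiMul p q i * pMul p q i * (xiD p q j * pD p q j) +
        xiD p q j * pD p q j * (xiMul p q i * pMul p q i) =
      if i = j then pMul p q i * pD p q i + xiD p q i * xiMul p q i else 0 := by
  rw [(commute_pMul_xiD i j).mul_mul_mul_comm, (commute_pD_xiMul j i).mul_mul_mul_comm,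
    pD_mul_pMul j i, mul_add, ← add_assoc, ← add_mul, add_comm (xiMul p q i * xiD p q j),
    xiD_xiMul_anticomm]
  by_cases h : i = j
  · subst h; simp
  · simp [h, Ne.symm h]

lemma opQ_mul_opQs_add_opQs_mul_opQ :
    opQ p q * opQs p q + opQs p q * opQ p q = opE p q + (p + q) • 1 - opS p q := by
  have hsum : opQ p q * opQs p q + opQs p q * opQ p q =
      ∑ i, (pMul p q i * pD p q i + xiD p q i * xiMul p q i) := by
    simp only [opQ, opQs, Finset.sum_mul_sum]
    conv_lhs => arg 2; rw [Finset.sum_comm]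
    simp only [← Finset.sum_add_distrib, anticomm_xiMul_pMul_xiD_pD, Finset.sum_ite_eq,
      Finset.mem_univ, if_true]
  have hdiag (i : Fin (p + q)) : xiD p q i * xiMul p q i = 1 - xiMul p q i * xiD p q i :=
    eq_sub_of_add_eq (by simpa using xiD_xiMul_anticomm i i)
  rw [hsum, Finset.sum_add_distrib, Finset.sum_congr rfl fun i _ => hdiag i,
    Finset.sum_sub_distrib, Finset.sum_const, Finset.card_univ, Fintype.card_fin, opE, opS]
  abel

section Degrees

variable {k κ : ℕ} {f : W p q} (i : Fin (p + q))

lemma pMul_mem_Wc (hf : f ∈ Wc p q k κ) : pMul p q i f ∈ Wc p q (k + 1) κ :=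
  ⟨fun S => by rw [pMul_apply, add_comm k]; exact (isHomogeneous_X ℝ i).mul (hf.1 S),
    fun S hS => by rw [pMul_apply, hf.2 S hS, mul_zero]⟩

lemma pD_mem_Wc (hf : f ∈ Wc p q k κ) : pD p q i f ∈ Wc p q (k - 1) κ :=
  ⟨fun S => (hf.1 S).pderiv, fun S hS => by rw [pD_apply, hf.2 S hS, map_zero]⟩

lemma xiMul_mem_Wc (hf : f ∈ Wc p q k κ) : xiMul p q i f ∈ Wc p q k (κ + 1) := by
  refine ⟨fun S => ?_, fun S hS => ?_⟩ <;> rw [xiMul_apply] <;> split_ifs with hi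
  · exact Submodule.smul_mem _ _ (hf.1 _)
  · exact zero_mem _
  · have := Finset.card_pos.2 ⟨i, hi⟩
    rw [hf.2 _ (by rw [Finset.card_erase_of_mem hi]; omega), smul_zero]
  · rfl

lemma xiD_mem_Wc (hf : f ∈ Wc p q k κ) : xiD p q i f ∈ Wc p q k (κ - 1) := by
  refine ⟨fun S => ?_, fun S hS => ?_⟩ <;> rw [xiD_apply] <;> split_ifs with hi
  · exact zero_mem _
  · exact Submodule.smul_mem _ _ (hf.1 _)
  · rfl
  · rw [hf.2 _ (by rw [Finset.card_insert_of_notMem hi]; omega), smul_zero]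

lemma pD_eq_zero_of_mem_Wc_zero (hf : f ∈ Wc p q 0 κ) : pD p q i f = 0 := by
  funext S
  have hS := hf.1 S
  rw [mem_homogeneousSubmodule, ← totalDegree_zero_iff_isHomogeneous,
    totalDegree_eq_zero_iff_eq_C] at hS
  rw [pD_apply, hS, pderiv_C, Pi.zero_apply]

lemma xiD_eq_zero_of_mem_Wc_zero (hf : f ∈ Wc p q k 0) : xiD p q i f = 0 := by
  funext S
  rw [xiD_apply]
  split_ifs with hi
  · rfl
  · rw [hf.2 _ (by rw [Finset.card_insert_of_notMem hi]; omega), smul_zero, Pi.zero_apply]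

lemma opQ_mem_Wc (hf : f ∈ Wc p q k κ) : opQ p q f ∈ Wc p q (k + 1) (κ + 1) := by
  rw [opQ, LinearMap.sum_apply]
  exact Submodule.sum_mem _ fun i _ => xiMul_mem_Wc i (pMul_mem_Wc i hf)

lemma opQs_mem_Wc (hf : f ∈ Wc p q k κ) : opQs p q f ∈ Wc p q (k - 1) (κ - 1) := by
  rw [opQs, LinearMap.sum_apply]
  exact Submodule.sum_mem _ fun i _ => xiD_mem_Wc i (pD_mem_Wc i hf)

/-- Where `opQs_mem_Wc` only speaks of truncated degrees, `Q*` vanishes. -/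
lemma opQs_eq_zero_of_mem_Wc (hf : f ∈ Wc p q k κ) (h : k = 0 ∨ κ = 0) : opQs p q f = 0 := by
  rw [opQs, LinearMap.sum_apply]
  refine Finset.sum_eq_zero fun i _ => ?_
  rw [Module.End.mul_apply]
  rcases h with rfl | rfl
  · rw [pD_eq_zero_of_mem_Wc_zero i hf, map_zero]
  · exact xiD_eq_zero_of_mem_Wc_zero i (pD_mem_Wc i hf)

lemma opE_apply_of_mem_Wc (hf : f ∈ Wc p q k κ) : opE p q f = (k : ℝ) • f := by
  funext S
  simp only [opE, LinearMap.sum_apply, Finset.sum_apply, Module.End.mul_apply, pMul_apply,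
    pD_apply]
  rw [(hf.1 S).sum_X_mul_pderiv, Pi.smul_apply, Nat.cast_smul_eq_nsmul]

lemma opS_apply_of_mem_Wc (hf : f ∈ Wc p q k κ) : opS p q f = (κ : ℝ) • f := by
  funext S
  have hterm (i : Fin (p + q)) : (xiMul p q i * xiD p q i) f S = if i ∈ S then f S else 0 := by
    rw [Module.End.mul_apply, xiMul_apply]
    split_ifs with hi
    · rw [xiD_apply, if_neg (Finset.notMem_erase i S), Finset.insert_erase hi, smul_smul,
        sgn_mul_self, one_smul]
    · rfl
  rw [opS, LinearMap.sum_apply, Finset.sum_apply, Finset.sum_congr rfl fun i _ => hterm i,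
    Finset.sum_ite_mem, Finset.univ_inter, Finset.sum_const, Pi.smul_apply,
    Nat.cast_smul_eq_nsmul]
  by_cases hS : S.card = κ
  · rw [hS]
  · rw [hf.2 S hS, smul_zero, smul_zero]

end Degrees

lemma WcZ_natCast (k κ : ℕ) : WcZ p q k κ = Wc p q k κ := by
  simp [WcZ]

lemma map_opQ_WcZ_le (k κ : ℤ) : (WcZ p q k κ).map (opQ p q) ≤ WcZ p q (k + 1) (κ + 1) := by
  rintro _ ⟨f, hf, rfl⟩
  rw [WcZ] at hf
  split_ifs at hf with h
  · lift k to ℕ using h.1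
    lift κ to ℕ using h.2
    rw [Int.toNat_natCast, Int.toNat_natCast] at hf
    exact_mod_cast (WcZ_natCast (p := p) (q := q) (k + 1) (κ + 1)).ge (opQ_mem_Wc hf)
  · rw [(Submodule.mem_bot ℝ).1 hf, map_zero]
    exact zero_mem _

lemma map_opQs_WcZ_le (k κ : ℤ) : (WcZ p q k κ).map (opQs p q) ≤ WcZ p q (k - 1) (κ - 1) := by
  rintro _ ⟨f, hf, rfl⟩
  rw [WcZ] at hf
  split_ifs at hf with h
  · lift k to ℕ using h.1
    lift κ to ℕ using h.2
    rw [Int.toNat_natCast, Int.toNat_natCast] at hf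
    by_cases h0 : k = 0 ∨ κ = 0
    · rw [opQs_eq_zero_of_mem_Wc hf h0]
      exact zero_mem _
    · rw [show (k : ℤ) - 1 = (k - 1 : ℕ) by omega, show (κ : ℤ) - 1 = (κ - 1 : ℕ) by omega,
        WcZ_natCast]
      exact opQs_mem_Wc hf
  · rw [(Submodule.mem_bot ℝ).1 hf, map_zero]
    exact zero_mem _

lemma opQ_opQs_add_opQs_opQ_of_mem_WcZ {k κ : ℤ} {f : W p q} (hf : f ∈ WcZ p q k κ) :
    opQ p q (opQs p q f) + opQs p q (opQ p q f) = ((p + q + k - κ : ℤ) : ℝ) • f := by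
  rw [WcZ] at hf
  split_ifs at hf with h
  · lift k to ℕ using h.1
    lift κ to ℕ using h.2
    rw [Int.toNat_natCast, Int.toNat_natCast] at hf
    rw [← Module.End.mul_apply, ← Module.End.mul_apply, ← LinearMap.add_apply,
      opQ_mul_opQs_add_opQs_mul_opQ, LinearMap.sub_apply, LinearMap.add_apply,
      LinearMap.smul_apply, Module.End.one_apply, opE_apply_of_mem_Wc hf,
      opS_apply_of_mem_Wc hf]
    push_cast
    module
  · simp [(Submodule.mem_bot ℝ).1 hf]

theorem statement3_general (p q : ℕ) :
    ∀ k κ : ℤ, 0 < (p + q : ℤ) + k - κ →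
      LinearMap.ker (opQ p q) ⊓ WcZ p q k κ = (WcZ p q (k-1) (κ-1)).map (opQ p q) ∧
      LinearMap.ker (opQs p q) ⊓ WcZ p q k κ = (WcZ p q (k+1) (κ+1)).map (opQs p q) ∧
      LinearMap.ker (opQs p q) ⊓ WcZ p q k κ =
        (LinearMap.ker (opQ p q) ⊓ WcZ p q (k+1) (κ+1)).map (opQs p q) := by
  intro k κ hpos
  have hc : ((p + q + k - κ : ℤ) : ℝ) ≠ 0 := by exact_mod_cast hpos.ne'
  have hQ := Module.End.ker_inf_eq_map_of_anticomm opQ_mul_self opQs_mul_self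
    (by simpa using map_opQ_WcZ_le (k - 1) (κ - 1)) (map_opQs_WcZ_le k κ) hc
    fun f hf => opQ_opQs_add_opQs_opQ_of_mem_WcZ hf
  have hQs := Module.End.ker_inf_eq_map_of_anticomm opQs_mul_self opQ_mul_self
    (by simpa using map_opQs_WcZ_le (k + 1) (κ + 1)) (map_opQ_WcZ_le k κ) hc
    fun f hf => (add_comm _ _).trans (opQ_opQs_add_opQs_opQ_of_mem_WcZ hf)
  exact ⟨hQ.1, hQs.1, hQs.2⟩

/-- For every bidegree `(k,κ)` with `n + k − κ > 0` (integer indices, with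
the convention that components with a negative index vanish): `ker Q ∩ W_{k,κ} = Q(W_{k−1,κ−1})`,
`ker Q* ∩ W_{k,κ} = Q*(W_{k+1,κ+1})`, and moreover
`ker Q* ∩ W_{k,κ} = Q*(ker Q ∩ W_{k+1,κ+1})`. -/
theorem statement3 (p q : ℕ) (hn : 1 ≤ p + q) :
    ∀ k κ : ℤ, 0 < (p + q : ℤ) + k - κ →
      LinearMap.ker (opQ p q) ⊓ WcZ p q k κ = (WcZ p q (k-1) (κ-1)).map (opQ p q) ∧
      LinearMap.ker (opQs p q) ⊓ WcZ p q k κ = (WcZ p q (k+1) (κ+1)).map (opQs p q) ∧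
      LinearMap.ker (opQs p q) ⊓ WcZ p q k κ =
        (LinearMap.ker (opQ p q) ⊓ WcZ p q (k+1) (κ+1)).map (opQs p q) :=
  statement3_general p q
end

end SpinQuant
end

section
/- Eigenvector perturbation lemma: let K be a field, V a K-vector space which is the internal direct sum of subspaces (V_l)_{l ∈ ℕ}, and let C, N be linear endomorphisms of V with C(V_l) ⊆ V_l for all l and N(V_l) ⊆ V_{l−1} for all l (with V_{−1} := 0). Fix k ∈ ℕ, γ ∈ K, and P_k ∈ V_k with C P_k = γ P_k. If for every l < k the restriction of C − γ·id to V_l is a bijection of V_l, then there exists a unique P ∈ V_0 + V_1 + … + V_{k−1} such that (C + N)(P_k + P) = γ (P_k + P). -/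
/-!
Put `A := C - γ` and `W n := V_0 + ⋯ + V_{n-1}`. Since `A` preserves each `V_l` and `N` maps
`V_l` into `W l`, the operator `A + N` is block upper triangular with respect to
`W n = W (n-1) ⊕ V_{n-1}`, with diagonal blocks the restrictions of `A`. Hence `A + N` is a
bijection of `W k` as soon as `A` is a bijection of every `V_l`, `l < k`. As `A P_k = 0`,
the eigenvector equation for `P_k + P` reads `(A + N) P = -N P_k`, and `N P_k ∈ W k`.
-/

namespace Submodule

variable {R V : Type*} [Ring R] [AddCommGroup V] [Module R V]

def sumBelow (Vl : ℕ → Submodule R V) (n : ℕ) : Submodule R V :=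
  ⨆ l ∈ Finset.range n, Vl l

variable {Vl : ℕ → Submodule R V}

@[simp]
theorem sumBelow_zero : sumBelow Vl 0 = ⊥ := by
  simp [sumBelow]

theorem sumBelow_succ (n : ℕ) : sumBelow Vl (n + 1) = sumBelow Vl n ⊔ Vl n := by
  rw [sumBelow, Finset.range_add_one, Finset.iSup_insert, sup_comm, sumBelow]

theorem le_sumBelow {l n : ℕ} (h : l < n) : Vl l ≤ sumBelow Vl n :=
  le_biSup Vl (Finset.mem_range.mpr h)

theorem sumBelow_mono : Monotone (sumBelow Vl) := fun _ _ hab =>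
  biSup_mono fun _ hl => Finset.mem_range.mpr ((Finset.mem_range.mp hl).trans_le hab)

theorem disjoint_sumBelow (hVl : iSupIndep Vl) (n : ℕ) : Disjoint (sumBelow Vl n) (Vl n) :=
  (hVl.disjoint_biSup (y := ↑(Finset.range n)) (by simp)).symm

variable {A N : Module.End R V}

theorem add_apply_mem_sumBelow (hA : ∀ l, ∀ x ∈ Vl l, A x ∈ Vl l)
    (hN : ∀ l, ∀ x ∈ Vl l, N x ∈ sumBelow Vl l) {n : ℕ} {x : V} (hx : x ∈ sumBelow Vl n) :
    (A + N) x ∈ sumBelow Vl n := by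
  suffices sumBelow Vl n ≤ (sumBelow Vl n).comap (A + N) from this hx
  refine iSup₂_le fun l hl y hy => ?_
  have hln := Finset.mem_range.mp hl
  exact add_mem (le_sumBelow hln (hA l y hy)) (sumBelow_mono hln.le (hN l y hy))

theorem eq_zero_of_add_apply_eq_zero (hVl : iSupIndep Vl) (hA : ∀ l, ∀ x ∈ Vl l, A x ∈ Vl l)
    (hN : ∀ l, ∀ x ∈ Vl l, N x ∈ sumBelow Vl l) {n : ℕ}
    (hinj : ∀ l < n, ∀ x ∈ Vl l, A x = 0 → x = 0) {x : V} (hx : x ∈ sumBelow Vl n)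
    (hx0 : (A + N) x = 0) : x = 0 := by
  induction n generalizing x with
  | zero => simpa using hx
  | succ m ih =>
    rw [sumBelow_succ] at hx
    obtain ⟨a, ha, b, hb, rfl⟩ := mem_sup.mp hx
    have hsplit : (A + N) a + N b + A b = 0 := by
      rw [← hx0]; simp only [LinearMap.add_apply, map_add]; abel
    have hlow : (A + N) a + N b ∈ sumBelow Vl m :=
      add_mem (add_apply_mem_sumBelow hA hN ha) (hN m b hb)
    have hAb : A b = 0 := disjoint_def.mp (disjoint_sumBelow hVl m) _
      (by rw [eq_neg_of_add_eq_zero_right hsplit]; exact neg_mem hlow) (hA m b hb)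
    obtain rfl : b = 0 := hinj m m.lt_add_one b hb hAb
    have hAa : (A + N) a = 0 := by simpa using hx0
    rw [add_zero]
    exact ih (fun l hl => hinj l (hl.trans m.lt_add_one)) ha hAa

theorem exists_mem_sumBelow_add_apply_eq (hN : ∀ l, ∀ x ∈ Vl l, N x ∈ sumBelow Vl l) {n : ℕ}
    (hsurj : ∀ l < n, ∀ y ∈ Vl l, ∃ x ∈ Vl l, A x = y) {y : V} (hy : y ∈ sumBelow Vl n) :
    ∃ x ∈ sumBelow Vl n, (A + N) x = y := by
  induction n generalizing y with
  | zero =>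
    rw [sumBelow_zero, mem_bot] at hy
    exact ⟨0, zero_mem _, by rw [hy, map_zero]⟩
  | succ m ih =>
    rw [sumBelow_succ] at hy
    obtain ⟨y', hy', z, hz, rfl⟩ := mem_sup.mp hy
    obtain ⟨b, hb, rfl⟩ := hsurj m m.lt_add_one z hz
    obtain ⟨a, ha, hAa⟩ := ih (fun l hl => hsurj l (hl.trans m.lt_add_one))
      (sub_mem hy' (hN m b hb))
    refine ⟨a + b, by rw [sumBelow_succ]; exact add_mem_sup ha hb, ?_⟩
    rw [map_add, hAa, LinearMap.add_apply]; abel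

end Submodule

open Submodule in
/-- eigenvector perturbation lemma.  Let `V` be a vector space over a
field `K`, internally graded by subspaces `(V_l)_{l ∈ ℕ}`, let `C` be an endomorphism
preserving the grading and `N` an endomorphism lowering the degree by one (with the
convention `V_{−1} = 0`).  If `P_k ∈ V_k` satisfies `C P_k = γ P_k` and, for every `l < k`,
`C − γ·id` restricts to a bijection of `V_l`, then there is a unique
`P ∈ V_0 + ⋯ + V_{k−1}` such that `P_k + P` is an eigenvector of `C + N` with
eigenvalue `γ`. -/
theorem statement14 (K : Type*) [Field K] (V : Type*) [AddCommGroup V] [Module K V]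
    (Vl : ℕ → Submodule K V) (hV : DirectSum.IsInternal Vl)
    (C N : Module.End K V)
    (hC : ∀ l, ∀ x ∈ Vl l, C x ∈ Vl l)
    (hN0 : ∀ x ∈ Vl 0, N x = 0)
    (hN : ∀ l, ∀ x ∈ Vl (l + 1), N x ∈ Vl l)
    (k : ℕ) (γ : K) (Pk : V) (hPk : Pk ∈ Vl k) (hCPk : C Pk = γ • Pk)
    (hbij : ∀ l < k,
      (∀ x ∈ Vl l, C x - γ • x = 0 → x = 0) ∧
      (∀ y ∈ Vl l, ∃ x ∈ Vl l, C x - γ • x = y)) :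
    ∃! P : V, P ∈ (⨆ l ∈ Finset.range k, Vl l) ∧
      (C + N) (Pk + P) = γ • (Pk + P) := by
  set A : Module.End K V := C - γ • 1
  have hAx : ∀ x, A x = C x - γ • x := fun _ => rfl
  have hA : ∀ l, ∀ x ∈ Vl l, A x ∈ Vl l := fun l x hx =>
    sub_mem (hC l x hx) (smul_mem _ γ hx)
  have hNlow : ∀ l, ∀ x ∈ Vl l, N x ∈ sumBelow Vl l
    | 0, x, hx => by simp [hN0 x hx]
    | l + 1, x, hx => le_sumBelow l.lt_add_one (hN l x hx)
  have heigen : ∀ P, (C + N) (Pk + P) = γ • (Pk + P) ↔ (A + N) P = -N Pk := fun P => by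
    rw [← sub_eq_zero, ← add_eq_zero_iff_eq_neg]
    simp only [A, LinearMap.add_apply, LinearMap.sub_apply, LinearMap.smul_apply,
      Module.End.one_apply, map_add, smul_add, hCPk]
    constructor <;> intro h <;> rw [← h] <;> abel
  obtain ⟨P, hP, hAP⟩ := exists_mem_sumBelow_add_apply_eq hNlow (A := A) (by simpa only [hAx] using fun l hl => (hbij l hl).2)
    (neg_mem (hNlow k Pk hPk))
  refine ⟨P, ⟨hP, (heigen P).mpr hAP⟩, fun Q ⟨hQ, hQP⟩ => ?_⟩
  refine sub_eq_zero.mp (eq_zero_of_add_apply_eq_zero hV.submodule_iSupIndep hA hNlow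
    (by simpa only [hAx] using fun l hl => (hbij l hl).1) (sub_mem hQ hP) ?_)
  rw [map_sub, (heigen Q).mp hQP, hAP, sub_self]
end

section
/- The superalgebra W is the internal direct sum W = (R·W + Q·W) ⊕ (ker T ∩ ker Q*): every element of W is uniquely the sum of an element of the ideal of W generated by R := η^{ij} p_i p_j and Q := ξ^i p_i, and an element annihilated by both T and Q*. -/
/-!
The Fischer pairing `⟨f, g⟩ = ∑_S ∑_d d! f_{S,d} g_{S,d}` is a positive definite symmetric form
on `W` for which multiplication by `p_i` is adjoint to `∂_{p_i}` and `ξ^i` to `∂_{ξ^i}`; hence `R`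
is adjoint to `T` and `Q` to `Q*`. So `ker T ∩ ker Q*` is orthogonal to the ideal `I = R·W + Q·W`,
which makes the intersection trivial. For the sum, fix a component `W_k` of polynomial degree `k`:
it is finite-dimensional and stable under `RT` and `QQ*`, so `W_k = (I ∩ W_k) ⊕ (I ∩ W_k)^⊥` inside
`W_k`, and for `v` in the complement `⟨Tv, Tv⟩ = ⟨RTv, v⟩ = 0` because `RTv ∈ I ∩ W_k`; likewise
`Q*v = 0`.
-/

open MvPolynomial Finset

namespace SpinQuant

noncomputable section

section BilinForm

variable {R M : Type*} [CommSemiring R] [AddCommMonoid M] [Module R M]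
  {B : LinearMap.BilinForm R M}

lemma isAdjointPair_sum {ι : Type*} (s : Finset ι) {f g : ι → Module.End R M}
    (h : ∀ i ∈ s, LinearMap.IsAdjointPair B B (f i) (g i)) :
    LinearMap.IsAdjointPair B B (⇑(∑ i ∈ s, f i)) (⇑(∑ i ∈ s, g i)) := by
  intro x y
  simp only [LinearMap.coe_sum, Finset.sum_apply, map_sum]
  exact sum_congr rfl fun i hi => h i hi x y

lemma ker_le_orthogonal_range {f g : Module.End R M} (h : LinearMap.IsAdjointPair B B f g) :
    LinearMap.ker g ≤ B.orthogonal (LinearMap.range f) := by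
  rintro y hy _ ⟨x, rfl⟩
  change B (f x) y = 0
  rw [h, LinearMap.mem_ker.mp hy, map_zero]

lemma orthogonal_sup (N L : Submodule R M) :
    B.orthogonal (N ⊔ L) = B.orthogonal N ⊓ B.orthogonal L := by
  refine le_antisymm (le_inf (B.orthogonal_le le_sup_left) (B.orthogonal_le le_sup_right)) ?_
  rintro v ⟨hN, hL⟩ u hu
  obtain ⟨n, hn, l, hl, rfl⟩ := Submodule.mem_sup.mp hu
  change B (n + l) v = 0
  rw [map_add, LinearMap.add_apply, hN n hn, hL l hl, add_zero]

lemma inf_orthogonal_eq_bot (hB : ∀ v, B v v = 0 → v = 0) (U : Submodule R M) :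
    U ⊓ B.orthogonal U = ⊥ :=
  eq_bot_iff.mpr fun v ⟨hvU, hv⟩ => hB v (hv v hvU)

lemma eq_zero_of_isAdjointPair_of_mem_orthogonal (hB : ∀ v, B v v = 0 → v = 0)
    {f g : Module.End R M} (h : LinearMap.IsAdjointPair B B f g) {U : Submodule R M} {v : M}
    (hv : v ∈ B.orthogonal U) (hfgv : f (g v) ∈ U) : g v = 0 :=
  hB _ (by rw [← h]; exact hv _ hfgv)

end BilinForm

section FiniteDimensional

variable {K V : Type*} [Field K] [AddCommGroup V] [Module K V] {B : LinearMap.BilinForm K V}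

lemma le_inf_sup_inf_orthogonal (hB : ∀ v, B v v = 0 → v = 0) (hrefl : B.IsRefl)
    (U E : Submodule K V) [FiniteDimensional K E] :
    E ≤ U ⊓ E ⊔ E ⊓ B.orthogonal (U ⊓ E) := by
  intro x hx
  set N := U.comap E.subtype
  have hcompl : IsCompl N ((B.restrict E).orthogonal N) := by
    refine LinearMap.BilinForm.isCompl_orthogonal_of_restrict_nondegenerate
      (fun u v h => hrefl u v h) ?_
    have hN : ∀ u : N, (B.restrict E).restrict N u u = 0 → u = 0 := fun u hu =>
      Subtype.ext (Subtype.ext (hB _ hu))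
    exact ⟨fun u hu => hN u (hu u), fun u hu => hN u (hu u)⟩
  obtain ⟨y, hy, z, hz, hyz⟩ := Submodule.mem_sup.mp (hcompl.sup_eq_top ▸ Submodule.mem_top
    (x := (⟨x, hx⟩ : E)))
  rw [show x = y + z from congrArg Subtype.val hyz.symm]
  refine Submodule.add_mem_sup ⟨hy, y.2⟩ ⟨z.2, fun n hn => ?_⟩
  exact hz ⟨n, hn.2⟩ hn.1

end FiniteDimensional

section Fischer

variable {σ : Type*} [Fintype σ]

def fischerWeight (d : σ →₀ ℕ) : ℝ := ∏ i, ((d i).factorial : ℝ)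

lemma fischerWeight_pos (d : σ →₀ ℕ) : 0 < fischerWeight d :=
  prod_pos fun i _ => mod_cast (d i).factorial_pos

lemma fischerWeight_add_single (d : σ →₀ ℕ) (i : σ) :
    fischerWeight (d + Finsupp.single i 1) = (d i + 1) * fischerWeight d := by
  classical
  simp only [fischerWeight, Finsupp.add_apply, Finsupp.single_apply]
  rw [← mul_prod_erase _ _ (mem_univ i), ← mul_prod_erase _ _ (mem_univ i), if_pos rfl,
    prod_congr rfl fun j hj => by rw [if_neg (ne_of_mem_erase hj).symm, add_zero],
    Nat.factorial_succ]
  push_cast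
  ring

variable (σ) in
/-- The Fischer pairing `⟨P, Q⟩ = ∑_d d! P_d Q_d`, where `d! = ∏ i, (d i)!`. -/
def fischerForm : LinearMap.BilinForm ℝ (MvPolynomial σ ℝ) :=
  Finsupp.linearCombination ℝ (fun d => fischerWeight d • lcoeff ℝ d) ∘ₗ
    (AddMonoidAlgebra.coeffLinearEquiv ℝ).toLinearMap

lemma fischerForm_apply_of_support_subset {P : MvPolynomial σ ℝ} {s : Finset (σ →₀ ℕ)}
    (hs : P.support ⊆ s) (Q : MvPolynomial σ ℝ) :
    fischerForm σ P Q = ∑ d ∈ s, fischerWeight d * coeff d P * coeff d Q := by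
  rw [← sum_subset hs fun d _ hd => by simp [notMem_support_iff.mp hd]]
  simp only [fischerForm, LinearMap.comp_apply, Finsupp.linearCombination_apply, Finsupp.sum,
    LinearMap.coe_sum, Finset.sum_apply]
  refine sum_congr rfl fun d _ => ?_
  simp [MvPolynomial.coeff]
  ring

lemma fischerForm_comm (P Q : MvPolynomial σ ℝ) : fischerForm σ P Q = fischerForm σ Q P := by
  classical
  rw [fischerForm_apply_of_support_subset subset_union_left,
    fischerForm_apply_of_support_subset (subset_union_right (s₁ := P.support))]
  exact sum_congr rfl fun d _ => by ring

lemma fischerForm_self (P : MvPolynomial σ ℝ) :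
    fischerForm σ P P = ∑ d ∈ P.support, fischerWeight d * coeff d P ^ 2 := by
  rw [fischerForm_apply_of_support_subset subset_rfl]
  exact sum_congr rfl fun d _ => by ring

lemma fischerForm_self_nonneg (P : MvPolynomial σ ℝ) : 0 ≤ fischerForm σ P P := by
  rw [fischerForm_self]
  exact sum_nonneg fun d _ => by have := fischerWeight_pos d; positivity

lemma eq_zero_of_fischerForm_self_eq_zero {P : MvPolynomial σ ℝ} (h : fischerForm σ P P = 0) :
    P = 0 := by
  rw [fischerForm_self, sum_eq_zero_iff_of_nonneg fun d _ => by
    have := fischerWeight_pos d; positivity] at h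
  by_contra hP
  obtain ⟨d, hd⟩ := ne_zero_iff.mp hP
  exact hd (by simpa [(fischerWeight_pos d).ne'] using h d (mem_support_iff.mpr hd))

lemma fischerForm_monomial (d : σ →₀ ℕ) (a : ℝ) (Q : MvPolynomial σ ℝ) :
    fischerForm σ (monomial d a) Q = fischerWeight d * a * coeff d Q := by
  classical
  rw [fischerForm_apply_of_support_subset support_monomial_subset, sum_singleton,
    coeff_monomial, if_pos rfl]

lemma fischerForm_X_mul (i : σ) (P Q : MvPolynomial σ ℝ) :
    fischerForm σ (X i * P) Q = fischerForm σ P (pderiv i Q) := by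
  classical
  induction P using MvPolynomial.induction_on' with
  | monomial d a =>
    rw [← pow_one (X i), ← monomial_single_add, fischerForm_monomial, fischerForm_monomial,
      coeff_pderiv, add_comm (Finsupp.single i 1), fischerWeight_add_single]
    ring
  | add P₁ P₂ h₁ h₂ =>
    rw [mul_add, map_add, map_add, LinearMap.add_apply, LinearMap.add_apply, h₁, h₂]

end Fischer

section FischerW

variable (p q : ℕ)

def fischerFormW : LinearMap.BilinForm ℝ (W p q) :=
  ∑ S, (fischerForm (Fin (p + q))).compl₁₂ (LinearMap.proj S) (LinearMap.proj S)

variable {p q}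

lemma fischerFormW_apply (f g : W p q) :
    fischerFormW p q f g = ∑ S, fischerForm (Fin (p + q)) (f S) (g S) := by
  simp [fischerFormW]

lemma eq_zero_of_fischerFormW_self_eq_zero {f : W p q} (h : fischerFormW p q f f = 0) : f = 0 := by
  rw [fischerFormW_apply, sum_eq_zero_iff_of_nonneg fun S _ => fischerForm_self_nonneg _] at h
  exact funext fun S => eq_zero_of_fischerForm_self_eq_zero (h S (mem_univ S))

lemma fischerFormW_isRefl : (fischerFormW p q).IsRefl := fun f g h => by
  rwa [fischerFormW_apply, sum_congr rfl fun S _ => fischerForm_comm _ _, ← fischerFormW_apply]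

lemma isAdjointPair_pMul_pD (i : Fin (p + q)) :
    LinearMap.IsAdjointPair (fischerFormW p q) (fischerFormW p q) (pMul p q i) (pD p q i) :=
  fun f g => by
    simp only [fischerFormW_apply]
    exact sum_congr rfl fun S _ => fischerForm_X_mul i (f S) (g S)

/-- The Koszul signs of `ξ^i` and `∂_{ξ^i}` match because `S ↦ S.erase i` and `T ↦ insert i T`
are inverse bijections between the monomials containing `ξ^i` and those that do not. -/
lemma isAdjointPair_xiMul_xiD (i : Fin (p + q)) :
    LinearMap.IsAdjointPair (fischerFormW p q) (fischerFormW p q) (xiMul p q i) (xiD p q i) :=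
  fun f g => by
    have hl : ∀ S, fischerForm _ (xiMul p q i f S) (g S) =
        if i ∈ S then sgn p q i S * fischerForm _ (f (S.erase i)) (g S) else 0 := fun S => by
      by_cases hi : i ∈ S <;> simp [xiMul, hi]
    have hr : ∀ S, fischerForm _ (f S) (xiD p q i g S) =
        if i ∈ S then 0 else sgn p q i (insert i S) * fischerForm _ (f S) (g (insert i S)) :=
      fun S => by by_cases hi : i ∈ S <;> simp [xiD, hi]
    simp only [fischerFormW_apply, hl, hr, sum_ite, sum_const_zero, add_zero, zero_add]
    refine sum_nbij' (fun S => S.erase i) (fun T => insert i T) ?_ ?_ ?_ ?_ ?_ <;>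
      intro S hS <;> simp_all

lemma pD_mul_xiD (i : Fin (p + q)) : pD p q i * xiD p q i = xiD p q i * pD p q i := by
  refine LinearMap.ext fun f => funext fun S => ?_
  by_cases hi : i ∈ S <;> simp [pD, xiD, hi]

lemma isAdjointPair_opR_opT :
    LinearMap.IsAdjointPair (fischerFormW p q) (fischerFormW p q) (opR p q) (opT p q) :=
  isAdjointPair_sum _ fun i _ =>
    ((isAdjointPair_pMul_pD i).mul (isAdjointPair_pMul_pD i)).smul _

lemma isAdjointPair_opQ_opQs :
    LinearMap.IsAdjointPair (fischerFormW p q) (fischerFormW p q) (opQ p q) (opQs p q) :=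
  isAdjointPair_sum _ fun i _ => by
    rw [← pD_mul_xiD]
    exact (isAdjointPair_xiMul_xiD i).mul (isAdjointPair_pMul_pD i)

end FischerW

section Grading

variable {p q : ℕ}

variable (p q) in
/-- Degrees live in `ℤ` so that `∂_{p_i}` lowers them by one without truncation; the components
of negative degree are zero. -/
def polyDegreeSubmodule (k : ℤ) : Submodule ℝ (W p q) :=
  Submodule.pi Set.univ fun _ => weightedHomogeneousSubmodule ℝ (1 : Fin (p + q) → ℤ) k

lemma mem_polyDegreeSubmodule {k : ℤ} {f : W p q} :
    f ∈ polyDegreeSubmodule p q k ↔ ∀ S, (f S).IsWeightedHomogeneous (1 : Fin (p + q) → ℤ) k := by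
  simp [polyDegreeSubmodule]

lemma finite_setOf_weight_one_eq {σ : Type*} [Finite σ] (k : ℤ) :
    {d : σ →₀ ℕ | Finsupp.weight (1 : σ → ℤ) d = k}.Finite := by
  refine (Finsupp.finite_of_nat_weight_eq 1 (fun _ => one_ne_zero) k.toNat).subset fun d hd => ?_
  simp only [Set.mem_ofPred_eq, Finsupp.weight_apply, Finsupp.sum, Pi.one_apply, smul_eq_mul,
    mul_one, nsmul_eq_mul] at hd ⊢
  rw [← Nat.cast_sum] at hd
  omega

instance finiteDimensional_polyDegreeSubmodule (k : ℤ) :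
    FiniteDimensional ℝ (polyDegreeSubmodule p q k) := by
  have := (finite_setOf_weight_one_eq (σ := Fin (p + q)) k).to_subtype
  have : FiniteDimensional ℝ (weightedHomogeneousSubmodule ℝ (1 : Fin (p + q) → ℤ) k) := by
    rw [weightedHomogeneousSubmodule_eq_finsupp_supported]
    exact Module.Finite.of_basis (basisRestrictSupport ℝ _)
  rw [polyDegreeSubmodule, ← Submodule.iSup_map_single]
  infer_instance

lemma iSup_polyDegreeSubmodule : ⨆ k, polyDegreeSubmodule p q k = ⊤ := by
  classical
  let := weightedDecomposition ℝ (1 : Fin (p + q) → ℤ)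
  rw [eq_top_iff, ← Submodule.pi_top, ← (DirectSum.Decomposition.isInternal
    (weightedHomogeneousSubmodule ℝ (1 : Fin (p + q) → ℤ))).submodule_iSup_eq_top,
    ← Submodule.iSup_map_single]
  simp only [Submodule.map_iSup]
  exact iSup_le fun S => iSup_le fun k => (Submodule.map_le_iff_le_comap.mpr
    (Submodule.le_comap_single_pi _)).trans (le_iSup (polyDegreeSubmodule p q) k)

lemma pMul_mem_polyDegreeSubmodule {k : ℤ} {f : W p q} (hf : f ∈ polyDegreeSubmodule p q k)
    (i : Fin (p + q)) : pMul p q i f ∈ polyDegreeSubmodule p q (k + 1) := by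
  rw [mem_polyDegreeSubmodule] at hf ⊢
  exact fun S => add_comm 1 k ▸ (isWeightedHomogeneous_X ℝ _ i).mul (hf S)

lemma pD_mem_polyDegreeSubmodule {k : ℤ} {f : W p q} (hf : f ∈ polyDegreeSubmodule p q (k + 1))
    (i : Fin (p + q)) : pD p q i f ∈ polyDegreeSubmodule p q k := by
  rw [mem_polyDegreeSubmodule] at hf ⊢
  exact fun S => (hf S).pderiv rfl

lemma xiMul_mem_polyDegreeSubmodule {k : ℤ} {f : W p q} (hf : f ∈ polyDegreeSubmodule p q k)
    (i : Fin (p + q)) : xiMul p q i f ∈ polyDegreeSubmodule p q k := fun S _ => by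
  dsimp only [xiMul, LinearMap.coe_mk, AddHom.coe_mk]
  split_ifs
  exacts [Submodule.smul_mem _ _ (hf _ trivial), Submodule.zero_mem _]

lemma xiD_mem_polyDegreeSubmodule {k : ℤ} {f : W p q} (hf : f ∈ polyDegreeSubmodule p q k)
    (i : Fin (p + q)) : xiD p q i f ∈ polyDegreeSubmodule p q k := fun S _ => by
  dsimp only [xiD, LinearMap.coe_mk, AddHom.coe_mk]
  split_ifs
  exacts [Submodule.zero_mem _, Submodule.smul_mem _ _ (hf _ trivial)]

lemma opR_opT_mem_polyDegreeSubmodule {k : ℤ} {f : W p q} (hf : f ∈ polyDegreeSubmodule p q k) :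
    opR p q (opT p q f) ∈ polyDegreeSubmodule p q k := by
  have hk : k - 2 + 1 + 1 = k := by ring
  have hT : opT p q f ∈ polyDegreeSubmodule p q (k - 2) := by
    simp only [opT, LinearMap.coe_sum, Finset.sum_apply, LinearMap.smul_apply, Module.End.mul_apply]
    exact Submodule.sum_mem _ fun i _ => Submodule.smul_mem _ _
      (pD_mem_polyDegreeSubmodule (pD_mem_polyDegreeSubmodule (by rwa [hk]) i) i)
  simp only [opR, LinearMap.coe_sum, Finset.sum_apply, LinearMap.smul_apply, Module.End.mul_apply]
  exact Submodule.sum_mem _ fun i _ => Submodule.smul_mem _ _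
    (hk ▸ pMul_mem_polyDegreeSubmodule (pMul_mem_polyDegreeSubmodule hT i) i)

lemma opQ_opQs_mem_polyDegreeSubmodule {k : ℤ} {f : W p q} (hf : f ∈ polyDegreeSubmodule p q k) :
    opQ p q (opQs p q f) ∈ polyDegreeSubmodule p q k := by
  have hk : k - 1 + 1 = k := by ring
  have hQs : opQs p q f ∈ polyDegreeSubmodule p q (k - 1) := by
    simp only [opQs, LinearMap.coe_sum, Finset.sum_apply, Module.End.mul_apply]
    exact Submodule.sum_mem _ fun i _ =>
      xiD_mem_polyDegreeSubmodule (pD_mem_polyDegreeSubmodule (by rwa [hk]) i) i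
  simp only [opQ, LinearMap.coe_sum, Finset.sum_apply, Module.End.mul_apply]
  exact Submodule.sum_mem _ fun i _ =>
    xiMul_mem_polyDegreeSubmodule (hk ▸ pMul_mem_polyDegreeSubmodule hQs i) i

end Grading

theorem statement15_general (p q : ℕ) :
    ((LinearMap.range (opR p q) ⊔ LinearMap.range (opQ p q)) ⊔
        (LinearMap.ker (opT p q) ⊓ LinearMap.ker (opQs p q)) = ⊤) ∧
    ((LinearMap.range (opR p q) ⊔ LinearMap.range (opQ p q)) ⊓
        (LinearMap.ker (opT p q) ⊓ LinearMap.ker (opQs p q)) = ⊥) := by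
  set B := fischerFormW p q
  have hB : ∀ f, B f f = 0 → f = 0 := fun _ => eq_zero_of_fischerFormW_self_eq_zero
  set U := LinearMap.range (opR p q) ⊔ LinearMap.range (opQ p q)
  have hker : LinearMap.ker (opT p q) ⊓ LinearMap.ker (opQs p q) ≤ B.orthogonal U := by
    rw [orthogonal_sup]
    exact inf_le_inf (ker_le_orthogonal_range isAdjointPair_opR_opT)
      (ker_le_orthogonal_range isAdjointPair_opQ_opQs)
  refine ⟨?_, eq_bot_iff.mpr ((inf_le_inf_left U hker).trans (inf_orthogonal_eq_bot hB U).le)⟩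
  rw [eq_top_iff, ← iSup_polyDegreeSubmodule, iSup_le_iff]
  intro k
  refine (le_inf_sup_inf_orthogonal hB fischerFormW_isRefl U _).trans (sup_le_sup inf_le_left ?_)
  rintro v ⟨hvk, hv⟩
  exact ⟨eq_zero_of_isAdjointPair_of_mem_orthogonal hB isAdjointPair_opR_opT hv
      ⟨Submodule.mem_sup_left ⟨_, rfl⟩, opR_opT_mem_polyDegreeSubmodule hvk⟩,
    eq_zero_of_isAdjointPair_of_mem_orthogonal hB isAdjointPair_opQ_opQs hv
      ⟨Submodule.mem_sup_right ⟨_, rfl⟩, opQ_opQs_mem_polyDegreeSubmodule hvk⟩⟩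

/-- `W` is the internal direct sum of the ideal `R·W + Q·W` generated by
`R = η^{ij} p_i p_j` and `Q = ξ^i p_i`, and of `ker T ∩ ker Q*`: the sum of these two
subspaces is all of `W` and their intersection is trivial. -/
theorem statement15 (p q : ℕ) (hn : 1 ≤ p + q) :
    ((LinearMap.range (opR p q) ⊔ LinearMap.range (opQ p q)) ⊔
        (LinearMap.ker (opT p q) ⊓ LinearMap.ker (opQs p q)) = ⊤) ∧
    ((LinearMap.range (opR p q) ⊔ LinearMap.range (opQ p q)) ⊓
        (LinearMap.ker (opT p q) ⊓ LinearMap.ker (opQs p q)) = ⊥) :=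
  statement15_general p q
end

end SpinQuant
end
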